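/- For any density matrices ρ and ξ on ℂ^d, any p ∈ (0,1), and any δ ≥ 0: if S((1−p)ρ + pξ) − [(1−p)S(ρ) + pS(ξ)] ≤ δ, then ‖ρ − ξ‖₂² ≤ 2(ln 2)δ/(p(1−p)). -/

import Mathlib

open scoped ComplexOrder

noncomputable section

/-- The Frobenius (Hilbert–Schmidt) norm of a complex matrix. -/
def frob {m n : Type*} [Fintype m] [Fintype n] (A : Matrix m n ℂ) : ℝ :=
  Real.sqrt (∑ i, ∑ j, ‖A i j‖ ^ 2)

/-- The von Neumann entropy in bits: S(ρ) = −∑ᵢ λᵢ log₂ λᵢ over the eigenvalues of ρ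
(with the convention 0·log₂ 0 = 0, which holds since `Real.logb 2 0 = 0`). -/
def vnEntropy {n : Type*} [Fintype n] [DecidableEq n] (ρ : Matrix n n ℂ) : ℝ :=
  if h : ρ.IsHermitian then ∑ i, -(h.eigenvalues i * Real.logb 2 (h.eigenvalues i)) else 0

/-!
With `σ = (1 - p) ρ + p ξ`, the entropy gain measured in nats is exactly
`(1 - p) D(ρ‖σ) + p D(ξ‖σ)`, where `D` is the relative entropy. For a density matrix `A` with
eigenbasis `(uᵢ)` and eigenvalues `aᵢ`, and `σ` with eigenbasis `(vₖ)` and eigenvalues `cₖ`, the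
overlaps `wᵢₖ = ‖⟨uᵢ, vₖ⟩‖²` form a doubly stochastic matrix with
`D(A‖σ) = ∑ wᵢₖ (aᵢ log aᵢ - aᵢ log cₖ - aᵢ + cₖ)` and `‖A - σ‖₂² = ∑ wᵢₖ (aᵢ - cₖ)²`.
Each bracket is at least `(aᵢ - cₖ)² / 2` because all eigenvalues lie in `[0, 1]`, so
`D(A‖σ) ≥ ‖A - σ‖₂² / 2`. Since `ρ - σ = p (ρ - ξ)` and `ξ - σ = (p - 1) (ρ - ξ)`, the gain is
at least `p (1 - p) ‖ρ - ξ‖₂² / (2 ln 2)`.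
-/

open Real

namespace Matrix

variable {n 𝕜 : Type*} [Fintype n] [DecidableEq n] [RCLike 𝕜]

lemma sum_norm_sq_row_of_mem_unitaryGroup {W : Matrix n n 𝕜} (hW : W ∈ unitaryGroup n 𝕜)
    (i : n) : ∑ k, ‖W i k‖ ^ 2 = 1 := by
  have h : (W * star W) i i = 1 := by rw [Unitary.mul_star_self_of_mem hW, one_apply_eq]
  simp only [mul_apply, star_apply, RCLike.star_def, RCLike.mul_conj] at h
  exact_mod_cast h

lemma sum_norm_sq_col_of_mem_unitaryGroup {W : Matrix n n 𝕜} (hW : W ∈ unitaryGroup n 𝕜)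
    (k : n) : ∑ i, ‖W i k‖ ^ 2 = 1 := by
  simpa [norm_star] using sum_norm_sq_row_of_mem_unitaryGroup (Unitary.star_mem hW) k

namespace IsHermitian

variable {A B : Matrix n n 𝕜} (hA : A.IsHermitian) (hB : B.IsHermitian)

lemma star_eigenvectorUnitary_mul :
    star (hA.eigenvectorUnitary : Matrix n n 𝕜) * A =
      diagonal (RCLike.ofReal ∘ hA.eigenvalues) * star (hA.eigenvectorUnitary : Matrix n n 𝕜) := by
  calc _ = star (hA.eigenvectorUnitary : Matrix n n 𝕜) * A *
        (hA.eigenvectorUnitary * star (hA.eigenvectorUnitary : Matrix n n 𝕜)) := by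
        rw [Unitary.mul_star_self_of_mem hA.eigenvectorUnitary.2, Matrix.mul_one]
    _ = _ := by
        rw [← hA.conjStarAlgAut_star_eigenvectorUnitary, Unitary.conjStarAlgAut_star_apply]
        simp only [Matrix.mul_assoc]

lemma mul_eigenvectorUnitary :
    A * (hA.eigenvectorUnitary : Matrix n n 𝕜) =
      (hA.eigenvectorUnitary : Matrix n n 𝕜) * diagonal (RCLike.ofReal ∘ hA.eigenvalues) := by
  calc _ = (hA.eigenvectorUnitary * star (hA.eigenvectorUnitary : Matrix n n 𝕜)) * A *
        hA.eigenvectorUnitary := by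
        rw [Unitary.mul_star_self_of_mem hA.eigenvectorUnitary.2, Matrix.one_mul]
    _ = _ := by
        rw [Matrix.mul_assoc _ (star _), hA.star_eigenvectorUnitary_mul, Matrix.mul_assoc,
          Matrix.mul_assoc, Unitary.star_mul_self_of_mem hA.eigenvectorUnitary.2, Matrix.mul_one]

def overlap (i k : n) : ℝ :=
  ‖(star (hA.eigenvectorUnitary : Matrix n n 𝕜) * hB.eigenvectorUnitary) i k‖ ^ 2

lemma overlap_nonneg (i k : n) : 0 ≤ overlap hA hB i k := by
  unfold overlap; positivity

lemma star_eigenvectorUnitary_mul_mem_unitaryGroup :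
    star (hA.eigenvectorUnitary : Matrix n n 𝕜) * hB.eigenvectorUnitary ∈ unitaryGroup n 𝕜 :=
  mul_mem (Unitary.star_mem hA.eigenvectorUnitary.2) hB.eigenvectorUnitary.2

lemma sum_overlap_right (i : n) : ∑ k, overlap hA hB i k = 1 :=
  sum_norm_sq_row_of_mem_unitaryGroup (star_eigenvectorUnitary_mul_mem_unitaryGroup hA hB) i

lemma sum_overlap_left (k : n) : ∑ i, overlap hA hB i k = 1 :=
  sum_norm_sq_col_of_mem_unitaryGroup (star_eigenvectorUnitary_mul_mem_unitaryGroup hA hB) k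

def diagInEigenbasis (k : n) : ℝ := ∑ i, hA.eigenvalues i * overlap hA hB i k

lemma star_eigenvectorUnitary_mul_mul_apply_self (k : n) :
    (star (hB.eigenvectorUnitary : Matrix n n 𝕜) * A * (hB.eigenvectorUnitary : Matrix n n 𝕜)) k k =
      diagInEigenbasis hA hB k := by
  have hconj : star (hB.eigenvectorUnitary : Matrix n n 𝕜) * A *
      (hB.eigenvectorUnitary : Matrix n n 𝕜) =
      star (star (hA.eigenvectorUnitary : Matrix n n 𝕜) * hB.eigenvectorUnitary) *
        diagonal (RCLike.ofReal ∘ hA.eigenvalues) *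
        (star (hA.eigenvectorUnitary : Matrix n n 𝕜) * (hB.eigenvectorUnitary : Matrix n n 𝕜)) := by
    calc _ = star (hB.eigenvectorUnitary : Matrix n n 𝕜) *
          (hA.eigenvectorUnitary * star (hA.eigenvectorUnitary : Matrix n n 𝕜)) * A *
          (hB.eigenvectorUnitary : Matrix n n 𝕜) := by
          rw [Unitary.mul_star_self_of_mem hA.eigenvectorUnitary.2, Matrix.mul_one]
      _ = _ := by
          simp only [star_mul, star_star, Matrix.mul_assoc]
          rw [← Matrix.mul_assoc (star _) A, hA.star_eigenvectorUnitary_mul, Matrix.mul_assoc]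
  rw [hconj, mul_apply, diagInEigenbasis]
  push_cast [overlap]
  generalize star (hA.eigenvectorUnitary : Matrix n n 𝕜) * hB.eigenvectorUnitary = W
  refine Finset.sum_congr rfl fun i _ => ?_
  rw [mul_diagonal, star_apply, ← RCLike.conj_mul, RCLike.star_def, Function.comp_apply]
  ring

end IsHermitian

end Matrix

section Frobenius

open Matrix

variable {m n : Type*} [Fintype m] [Fintype n]

lemma frob_nonneg (A : Matrix m n ℂ) : 0 ≤ frob A := Real.sqrt_nonneg _

lemma frob_sq (A : Matrix m n ℂ) : frob A ^ 2 = ∑ i, ∑ j, ‖A i j‖ ^ 2 :=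
  Real.sq_sqrt (by positivity)

lemma frob_sq_eq_re_trace (A : Matrix m n ℂ) : frob A ^ 2 = (Aᴴ * A).trace.re := by
  rw [frob_sq, Finset.sum_comm, trace]
  simp only [diag_apply, mul_apply, conjTranspose_apply, RCLike.star_def, RCLike.conj_mul]
  norm_cast

lemma frob_smul_sq (c : ℂ) (A : Matrix m n ℂ) : frob (c • A) ^ 2 = ‖c‖ ^ 2 * frob A ^ 2 := by
  simp only [frob_sq, Finset.mul_sum, Matrix.smul_apply, smul_eq_mul, norm_mul, mul_pow]

variable [DecidableEq m] [DecidableEq n]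

lemma frob_unitary_mul_mul_unitary {U : Matrix m m ℂ} {V : Matrix n n ℂ}
    (hU : U ∈ unitaryGroup m ℂ) (hV : V ∈ unitaryGroup n ℂ) (A : Matrix m n ℂ) :
    frob (U * A * V) = frob A := by
  rw [← sq_eq_sq₀ (frob_nonneg _) (frob_nonneg _), frob_sq_eq_re_trace, frob_sq_eq_re_trace]
  have hU' : Uᴴ * U = 1 := Unitary.star_mul_self_of_mem hU
  have hV' : V * Vᴴ = 1 := Unitary.mul_star_self_of_mem hV
  calc ((U * A * V)ᴴ * (U * A * V)).trace.re = (Vᴴ * (Aᴴ * A * V)).trace.re := by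
        simp only [conjTranspose_mul, Matrix.mul_assoc, ← Matrix.mul_assoc Uᴴ U, hU',
          Matrix.one_mul]
    _ = (Aᴴ * A).trace.re := by rw [trace_mul_comm, Matrix.mul_assoc, hV', Matrix.mul_one]

end Frobenius

namespace Matrix.IsHermitian

variable {n : Type*} [Fintype n] [DecidableEq n] {A B : Matrix n n ℂ}

lemma frob_sub_sq_eq_sum_overlap (hA : A.IsHermitian) (hB : B.IsHermitian) :
    frob (A - B) ^ 2 =
      ∑ i, ∑ k, overlap hA hB i k * (hA.eigenvalues i - hB.eigenvalues k) ^ 2 := by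
  have hconj : star (hA.eigenvectorUnitary : Matrix n n ℂ) * (A - B) *
      (hB.eigenvectorUnitary : Matrix n n ℂ) =
      diagonal (RCLike.ofReal ∘ hA.eigenvalues) *
          (star (hA.eigenvectorUnitary : Matrix n n ℂ) * (hB.eigenvectorUnitary : Matrix n n ℂ)) -
        (star (hA.eigenvectorUnitary : Matrix n n ℂ) * (hB.eigenvectorUnitary : Matrix n n ℂ)) *
          diagonal (RCLike.ofReal ∘ hB.eigenvalues) := by
    rw [Matrix.mul_sub, Matrix.sub_mul, hA.star_eigenvectorUnitary_mul, Matrix.mul_assoc _ B,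
      hB.mul_eigenvectorUnitary, Matrix.mul_assoc, Matrix.mul_assoc]
  rw [← frob_unitary_mul_mul_unitary (Unitary.star_mem hA.eigenvectorUnitary.2)
    hB.eigenvectorUnitary.2, hconj, frob_sq]
  refine Finset.sum_congr rfl fun i _ => Finset.sum_congr rfl fun k _ => ?_
  rw [sub_apply, diagonal_mul, mul_diagonal, overlap]
  generalize (star (hA.eigenvectorUnitary : Matrix n n ℂ) * hB.eigenvectorUnitary) i k = w
  rw [mul_comm w, ← sub_mul, norm_mul, mul_pow, mul_comm, Function.comp_apply, Function.comp_apply,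
    ← RCLike.ofReal_sub, RCLike.norm_ofReal, sq_abs]

end Matrix.IsHermitian

section PinskerScalar

open Set

lemma sq_sub_div_two_le_mul_log_sub {a c : ℝ} (ha0 : 0 ≤ a) (ha1 : a ≤ 1) (hc0 : 0 < c)
    (hc1 : c ≤ 1) : (a - c) ^ 2 / 2 ≤ a * log a - a * log c - a + c := by
  let g : ℝ → ℝ := fun x => x * log x - x * log c - x + c - (x - c) ^ 2 / 2
  have hg : ∀ x, 0 < x → HasDerivAt g (log x - log c - (x - c)) x := fun x hx => by
    have := (((((hasDerivAt_mul_log hx.ne').sub ((hasDerivAt_id x).mul_const (log c))).sub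
      (hasDerivAt_id x)).add_const c).sub ((((hasDerivAt_id x).sub_const c).pow 2).div_const 2))
    exact this.congr_deriv (by norm_num; ring)
  have hcont : Continuous g := by
    have := continuous_mul_log
    fun_prop
  suffices 0 ≤ g a by simp only [g] at this; linarith
  have hgc : g c = 0 := by simp [g]
  rcases le_total c a with hca | hac
  · -- `g' x ≥ 0` on `(c, 1)`: `log (x / c) ≥ 1 - c / x = (x - c) / x ≥ x - c`
    have hmono : MonotoneOn g (Icc c 1) := by
      refine monotoneOn_of_hasDerivWithinAt_nonneg (convex_Icc c 1) hcont.continuousOn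
        (fun x hx => (hg x ?_).hasDerivWithinAt) fun x hx => ?_
      all_goals rw [interior_Icc] at hx
      · exact hc0.trans hx.1
      have hx0 : 0 < x := hc0.trans hx.1
      have hlog := one_sub_inv_le_log_of_pos (div_pos hx0 hc0)
      rw [log_div hx0.ne' hc0.ne', inv_div, one_sub_div hx0.ne'] at hlog
      have : x - c ≤ (x - c) / x := by
        rw [le_div_iff₀ hx0]; nlinarith [hx.1, hx.2]
      linarith
    simpa [hgc] using hmono ⟨le_rfl, hc1⟩ ⟨hca, ha1⟩ hca
  · -- `g' x ≤ 0` on `(a, c)`: `log (x / c) ≤ x / c - 1 = (x - c) / c ≤ x - c`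
    have hanti : AntitoneOn g (Icc a c) := by
      refine antitoneOn_of_hasDerivWithinAt_nonpos (convex_Icc a c) hcont.continuousOn
        (fun x hx => (hg x ?_).hasDerivWithinAt) fun x hx => ?_
      all_goals rw [interior_Icc] at hx
      · exact ha0.trans_lt hx.1
      have hx0 : 0 < x := ha0.trans_lt hx.1
      have hlog := log_le_sub_one_of_pos (div_pos hx0 hc0)
      rw [log_div hx0.ne' hc0.ne', div_sub_one hc0.ne'] at hlog
      have : (x - c) / c ≤ x - c := by
        rw [div_le_iff₀ hc0]; nlinarith [hx.1, hx.2]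
      linarith
    simpa [hgc] using hanti ⟨le_rfl, hac⟩ ⟨hac, le_rfl⟩ hac

lemma mul_sq_sub_div_two_le_mul {w a c : ℝ} (hw : 0 ≤ w) (ha0 : 0 ≤ a) (ha1 : a ≤ 1)
    (hc0 : 0 ≤ c) (hc1 : c ≤ 1) (hsupp : c = 0 → w * a = 0) :
    w * ((a - c) ^ 2 / 2) ≤ w * (a * log a - a * log c - a + c) := by
  rcases hc0.eq_or_lt with rfl | hc0
  · rcases mul_eq_zero.1 (hsupp rfl) with rfl | rfl <;> simp
  · exact mul_le_mul_of_nonneg_left (sq_sub_div_two_le_mul_log_sub ha0 ha1 hc0 hc1) hw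

theorem sum_mul_sq_sub_div_two_le {ι κ : Type*} [Fintype ι] [Fintype κ] {w : ι → κ → ℝ}
    {a : ι → ℝ} {c : κ → ℝ} (hw : ∀ i k, 0 ≤ w i k) (hrow : ∀ i, ∑ k, w i k = 1)
    (hcol : ∀ k, ∑ i, w i k = 1) (ha : ∀ i, a i ∈ Icc 0 1) (hc : ∀ k, c k ∈ Icc 0 1)
    (hsum : ∑ i, a i = ∑ k, c k) (hsupp : ∀ k, c k = 0 → ∑ i, a i * w i k = 0) :
    (∑ i, ∑ k, w i k * (a i - c k) ^ 2) / 2 ≤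
      ∑ i, a i * log (a i) - ∑ k, (∑ i, a i * w i k) * log (c k) := by
  have hterm : ∀ i k, w i k * ((a i - c k) ^ 2 / 2) ≤
      w i k * (a i * log (a i) - a i * log (c k) - a i + c k) := fun i k =>
    mul_sq_sub_div_two_le_mul (hw i k) (ha i).1 (ha i).2 (hc k).1 (hc k).2 fun hck => by
      rw [mul_comm]
      exact (Finset.sum_eq_zero_iff_of_nonneg fun j _ => mul_nonneg (ha j).1 (hw j k)).1
        (hsupp k hck) i (Finset.mem_univ i)
  have h1 : ∑ i, ∑ k, w i k * (a i * log (a i)) = ∑ i, a i * log (a i) := by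
    simp only [← Finset.sum_mul, hrow, one_mul]
  have h2 : ∑ i, ∑ k, w i k * (a i * log (c k)) = ∑ k, (∑ i, a i * w i k) * log (c k) := by
    rw [Finset.sum_comm]
    simp only [Finset.sum_mul, mul_left_comm, mul_assoc]
  have h3 : ∑ i, ∑ k, w i k * a i = ∑ i, a i := by
    simp only [← Finset.sum_mul, hrow, one_mul]
  have h4 : ∑ i, ∑ k, w i k * c k = ∑ k, c k := by
    rw [Finset.sum_comm]
    simp only [← Finset.sum_mul, hcol, one_mul]
  calc (∑ i, ∑ k, w i k * (a i - c k) ^ 2) / 2 = ∑ i, ∑ k, w i k * ((a i - c k) ^ 2 / 2) := by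
        simp only [Finset.sum_div, mul_div_assoc]
    _ ≤ ∑ i, ∑ k, w i k * (a i * log (a i) - a i * log (c k) - a i + c k) :=
        Finset.sum_le_sum fun i _ => Finset.sum_le_sum fun k _ => hterm i k
    _ = _ := by
        simp only [mul_add, mul_sub, Finset.sum_add_distrib, Finset.sum_sub_distrib, h1, h2, h3, h4,
          hsum]
        ring

end PinskerScalar

namespace Matrix

variable {n : Type*} [Fintype n] [DecidableEq n]

lemma IsHermitian.sum_eigenvalues_eq_one {𝕜 : Type*} [RCLike 𝕜] {A : Matrix n n 𝕜}
    (hA : A.IsHermitian) (htr : A.trace = 1) : ∑ i, hA.eigenvalues i = 1 := by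
  have h := hA.trace_eq_sum_eigenvalues
  rw [htr] at h
  exact_mod_cast h.symm

lemma PosSemidef.eigenvalues_mem_Icc {𝕜 : Type*} [RCLike 𝕜] {A : Matrix n n 𝕜}
    (hA : A.PosSemidef) (htr : A.trace = 1) (i : n) : hA.1.eigenvalues i ∈ Set.Icc 0 1 :=
  ⟨hA.eigenvalues_nonneg i,
    (Finset.single_le_sum (fun j _ => hA.eigenvalues_nonneg j) (Finset.mem_univ i)).trans_eq
      (hA.1.sum_eigenvalues_eq_one htr)⟩

variable {A B ρ ξ : Matrix n n ℂ}

/-- Umegaki's relative entropy `Tr A (log A - log B)` in nats, read off the eigenbases of `A`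
and `B`. A zero eigenvalue of `B` contributes `0` here (`log 0 = 0`), not `+∞`. -/
def IsHermitian.relEntropy (hA : A.IsHermitian) (hB : B.IsHermitian) : ℝ :=
  ∑ i, hA.eigenvalues i * log (hA.eigenvalues i) -
    ∑ k, hA.diagInEigenbasis hB k * log (hB.eigenvalues k)

namespace PosSemidef

lemma diagInEigenbasis_nonneg (hA : A.PosSemidef) (hB : B.IsHermitian) (k : n) :
    0 ≤ hA.1.diagInEigenbasis hB k :=
  Finset.sum_nonneg fun i _ => mul_nonneg (hA.eigenvalues_nonneg i) (hA.1.overlap_nonneg hB i k)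

theorem frob_sub_sq_div_two_le_relEntropy (hA : A.PosSemidef) (hAtr : A.trace = 1)
    (hB : B.PosSemidef) (hBtr : B.trace = 1)
    (hsupp : ∀ k, hB.1.eigenvalues k = 0 → hA.1.diagInEigenbasis hB.1 k = 0) :
    frob (A - B) ^ 2 / 2 ≤ hA.1.relEntropy hB.1 := by
  rw [hA.1.frob_sub_sq_eq_sum_overlap hB.1]
  exact sum_mul_sq_sub_div_two_le (hA.1.overlap_nonneg hB.1) (hA.1.sum_overlap_right hB.1)
    (hA.1.sum_overlap_left hB.1) (hA.eigenvalues_mem_Icc hAtr) (hB.eigenvalues_mem_Icc hBtr)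
    (by rw [hA.1.sum_eigenvalues_eq_one hAtr, hB.1.sum_eigenvalues_eq_one hBtr]) hsupp

end PosSemidef

namespace IsHermitian

lemma log_two_mul_vnEntropy (hA : A.IsHermitian) :
    log 2 * vnEntropy A = -∑ i, hA.eigenvalues i * log (hA.eigenvalues i) := by
  rw [vnEntropy, dif_pos hA, Finset.mul_sum, ← Finset.sum_neg_distrib]
  refine Finset.sum_congr rfl fun i _ => ?_
  rw [logb]
  field_simp

lemma smul_diagInEigenbasis_add_smul (hρ : ρ.IsHermitian) (hξ : ξ.IsHermitian) {s t : ℝ}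
    (hσ : ((s : ℂ) • ρ + (t : ℂ) • ξ).IsHermitian) (k : n) :
    s * hρ.diagInEigenbasis hσ k + t * hξ.diagInEigenbasis hσ k = hσ.eigenvalues k := by
  have hk := congr_fun (congr_fun hσ.conjStarAlgAut_star_eigenvectorUnitary k) k
  rw [Unitary.conjStarAlgAut_star_apply, Matrix.mul_add, Matrix.add_mul, Matrix.mul_smul,
    Matrix.smul_mul, Matrix.mul_smul, Matrix.smul_mul, add_apply, smul_apply, smul_apply,
    star_eigenvectorUnitary_mul_mul_apply_self hρ, star_eigenvectorUnitary_mul_mul_apply_self hξ,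
    diagonal_apply_eq, Function.comp_apply, smul_eq_mul, smul_eq_mul] at hk
  exact Complex.ofReal_injective (by push_cast; exact hk)

theorem log_two_mul_vnEntropy_sub (hρ : ρ.IsHermitian) (hξ : ξ.IsHermitian) {s t : ℝ}
    (hσ : ((s : ℂ) • ρ + (t : ℂ) • ξ).IsHermitian) :
    log 2 * (vnEntropy ((s : ℂ) • ρ + (t : ℂ) • ξ) - (s * vnEntropy ρ + t * vnEntropy ξ)) =
      s * hρ.relEntropy hσ + t * hξ.relEntropy hσ := by
  have hmix : ∑ k, hσ.eigenvalues k * log (hσ.eigenvalues k) =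
      s * ∑ k, hρ.diagInEigenbasis hσ k * log (hσ.eigenvalues k) +
        t * ∑ k, hξ.diagInEigenbasis hσ k * log (hσ.eigenvalues k) := by
    simp only [Finset.mul_sum, ← Finset.sum_add_distrib, ← hρ.smul_diagInEigenbasis_add_smul hξ hσ]
    refine Finset.sum_congr rfl fun k _ => ?_
    ring
  calc _ = log 2 * vnEntropy ((s : ℂ) • ρ + (t : ℂ) • ξ) - s * (log 2 * vnEntropy ρ) -
        t * (log 2 * vnEntropy ξ) := by ring
    _ = _ := by
        rw [hσ.log_two_mul_vnEntropy, hρ.log_two_mul_vnEntropy, hξ.log_two_mul_vnEntropy, hmix,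
          relEntropy, relEntropy]
        ring

end IsHermitian

lemma PosSemidef.diagInEigenbasis_eq_zero_of_smul_add_smul (hρ : ρ.PosSemidef)
    (hξ : ξ.PosSemidef) {s t : ℝ} (hs : 0 < s) (ht : 0 < t)
    (hσ : ((s : ℂ) • ρ + (t : ℂ) • ξ).IsHermitian) (k : n) (hk : hσ.eigenvalues k = 0) :
    hρ.1.diagInEigenbasis hσ k = 0 ∧ hξ.1.diagInEigenbasis hσ k = 0 := by
  have hmix := hρ.1.smul_diagInEigenbasis_add_smul hξ.1 hσ k
  have := hρ.diagInEigenbasis_nonneg hσ k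
  have := hξ.diagInEigenbasis_nonneg hσ k
  constructor <;> nlinarith

end Matrix

theorem small_entropy_gain_implies_close_general {d : ℕ} (ρ ξ : Matrix (Fin d) (Fin d) ℂ)
    (hρ : ρ.PosSemidef) (hρt : ρ.trace = 1)
    (hξ : ξ.PosSemidef) (hξt : ξ.trace = 1)
    (p : ℝ) (hp : p ∈ Set.Ioo (0 : ℝ) 1) (δ : ℝ)
    (h : vnEntropy (((1 - p : ℝ) : ℂ) • ρ + ((p : ℝ) : ℂ) • ξ) -
        ((1 - p) * vnEntropy ρ + p * vnEntropy ξ) ≤ δ) :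
    frob (ρ - ξ) ^ 2 ≤ 2 * Real.log 2 * δ / (p * (1 - p)) := by
  obtain ⟨hp0, hp1⟩ := hp
  set σ := ((1 - p : ℝ) : ℂ) • ρ + ((p : ℝ) : ℂ) • ξ
  have hσ : σ.PosSemidef := (hρ.smul (Complex.zero_le_real.2 (sub_nonneg.2 hp1.le))).add
    (hξ.smul (Complex.zero_le_real.2 hp0.le))
  have hσt : σ.trace = 1 := by
    simp only [σ, Matrix.trace_add, Matrix.trace_smul, hρt, hξt, smul_eq_mul, mul_one]
    push_cast; ring
  have hsupp := hρ.diagInEigenbasis_eq_zero_of_smul_add_smul hξ (sub_pos.2 hp1) hp0 hσ.1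
  have hρσ := hρ.frob_sub_sq_div_two_le_relEntropy hρt hσ hσt fun k hk => (hsupp k hk).1
  have hξσ := hξ.frob_sub_sq_div_two_le_relEntropy hξt hσ hσt fun k hk => (hsupp k hk).2
  rw [show ρ - σ = ((p : ℝ) : ℂ) • (ρ - ξ) by simp only [σ]; module, frob_smul_sq] at hρσ
  rw [show ξ - σ = ((p - 1 : ℝ) : ℂ) • (ρ - ξ) by simp only [σ]; push_cast; module,
    frob_smul_sq] at hξσ
  simp only [Complex.norm_real, Real.norm_eq_abs, sq_abs] at hρσ hξσ
  have hgap := hρ.1.log_two_mul_vnEntropy_sub hξ.1 hσ.1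
  rw [le_div_iff₀ (mul_pos hp0 (sub_pos.2 hp1))]
  linarith [mul_le_mul_of_nonneg_left hρσ (sub_nonneg.2 hp1.le),
    mul_le_mul_of_nonneg_left hξσ hp0.le,
    mul_le_mul_of_nonneg_left h (Real.log_pos one_lt_two).le]

theorem small_entropy_gain_implies_close {d : ℕ} (ρ ξ : Matrix (Fin d) (Fin d) ℂ)
    (hρ : ρ.PosSemidef) (hρt : ρ.trace = 1)
    (hξ : ξ.PosSemidef) (hξt : ξ.trace = 1)
    (p : ℝ) (hp : p ∈ Set.Ioo (0 : ℝ) 1) (δ : ℝ) (hδ : 0 ≤ δ)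
    (h : vnEntropy (((1 - p : ℝ) : ℂ) • ρ + ((p : ℝ) : ℂ) • ξ) -
        ((1 - p) * vnEntropy ρ + p * vnEntropy ξ) ≤ δ) :
    frob (ρ - ξ) ^ 2 ≤ 2 * Real.log 2 * δ / (p * (1 - p)) :=
  small_entropy_gain_implies_close_general ρ ξ hρ hρt hξ hξt p hp δ h
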